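/- (Formalisation of SFR1, simplified) In the Tokeneer user-entry transition system, if the state satisfies the conjunction of invariants Inv₁ ∧ Inv₂, the latch is currently locked, and executing the combined user-entry operation (the nondeterministic choice of all entry operations) can result in a state where the latch is unlocked, then in the initial state either (UserTokenOK ∧ FingerOK) holds or UserTokenWithOKAuthCert holds. -/
import Mathlib


inductive Status | quiescent | gotUserToken | waitingFinger | gotFinger | waitingEntry | waitingUpdateToken | waitingRemoveTokenSuccess
deriving DecidableEq

inductive Presence | present | absent
deriving DecidableEq

inductive Display | blank | insertFinger | wait | doorUnlocked
deriving DecidableEq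

inductive Latch | locked | unlocked
deriving DecidableEq

structure TIS where
  status : Status
  userTokenPresence : Presence
  fingerPresence : Presence
  latch : Latch
  currentDisplay : Display
  UserTokenOK : Prop
  UserTokenWithOKAuthCert : Prop
  FingerOK : Prop

open Status Presence Display Latch

def BioCheckRequired (s s' : TIS) : Prop :=
  (s.status = gotUserToken ∧ s.userTokenPresence = present ∧
    s.UserTokenOK ∧ ¬ s.UserTokenWithOKAuthCert) ∧
  s' = { s with status := waitingFinger, currentDisplay := insertFinger }

def ReadFingerOK (s s' : TIS) : Prop :=
  (s.status = waitingFinger ∧ s.fingerPresence = present ∧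
    s.userTokenPresence = present) ∧
  s' = { s with status := gotFinger, currentDisplay := Display.wait }

def UnlockDoorOK (s s' : TIS) : Prop :=
  (s.status = waitingRemoveTokenSuccess ∧ s.userTokenPresence = absent) ∧
  s' = { s with latch := unlocked, status := quiescent, currentDisplay := doorUnlocked }

def Inv1 (s : TIS) : Prop :=
  (s.status = gotFinger ∨ s.status = waitingFinger ∨ s.status = waitingUpdateToken ∨
    s.status = waitingEntry ∨ s.status = waitingRemoveTokenSuccess) →
  (s.UserTokenWithOKAuthCert ∨ s.UserTokenOK)

def Inv2 (s : TIS) : Prop :=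
  (s.status = waitingEntry ∨ s.status = waitingRemoveTokenSuccess) →
  (s.UserTokenWithOKAuthCert ∨ s.FingerOK)

/-- The combined user-entry operation: nondeterministic choice of all entry
operations.  All operations other than `UnlockDoorOK` leave the latch locked. -/
def EntryOp (s s' : TIS) : Prop :=
  BioCheckRequired s s' ∨ ReadFingerOK s s' ∨ UnlockDoorOK s s'

theorem SFR1_simplified (s : TIS)
    (hI1 : Inv1 s) (hI2 : Inv2 s) (hlocked : s.latch = locked)
    (hstep : ∃ s', EntryOp s s' ∧ s'.latch = unlocked) :
    (s.UserTokenOK ∧ s.FingerOK) ∨ s.UserTokenWithOKAuthCert := by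
  obtain ⟨s', hop, hul⟩ := hstep
  rcases hop with ⟨_, rfl⟩ | ⟨_, rfl⟩ | ⟨⟨hst, _⟩, rfl⟩
  · simp_all
  · simp_all
  · have h1 := hI1 (Or.inr (Or.inr (Or.inr (Or.inr hst))))
    have h2 := hI2 (Or.inr hst)
    tauto
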